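/- With notation as in the tree-collapse construction (H ◁ K ≤ G finite index, S a finite generating set, X(G/H) the Schreier graph, X(K/H) the collapsed Cayley graph of K/H), if h(X(G/H)) ≤ 1/(2[G:K]) then h(X(K/H)) ≤ 4·h(X(G/H))·[G:K]²·|S|. -/

import Mathlib

open Finset

open Classical in
noncomputable def edgeBd {V : Type*} [Fintype V] (G : SimpleGraph V) (A : Finset V) :
    Finset (Sym2 V) :=
  G.edgeFinset.filter fun e => ∃ a ∈ A, ∃ b ∉ A, e = s(a, b)

open Classical in
noncomputable def cheeger {V : Type*} [Fintype V] (G : SimpleGraph V) : ℝ :=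
  sInf { r : ℝ | ∃ A : Finset V, A.Nonempty ∧ A ≠ Finset.univ ∧
    r = (edgeBd G A).card / min (A.card : ℝ) ((Fintype.card V : ℝ) - A.card) }

lemma cheeger_set_nonneg {V : Type*} [Fintype V] (G : SimpleGraph V) :
    ∀ r ∈ { r : ℝ | ∃ A : Finset V, A.Nonempty ∧ A ≠ Finset.univ ∧
      r = (edgeBd G A).card / min (A.card : ℝ) ((Fintype.card V : ℝ) - A.card) }, 0 ≤ r := by
  rintro r ⟨A, _, _, rfl⟩
  apply div_nonneg (Nat.cast_nonneg _)
  refine le_min (Nat.cast_nonneg _) ?_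
  have := A.card_le_univ
  rw [sub_nonneg]
  exact_mod_cast le_trans this (le_of_eq Finset.card_univ)

lemma cheeger_nonneg {V : Type*} [Fintype V] (G : SimpleGraph V) : 0 ≤ cheeger G :=
  Real.sInf_nonneg (cheeger_set_nonneg G)

lemma cheeger_le_ratio {V : Type*} [Fintype V] (G : SimpleGraph V) (A : Finset V)
    (h1 : A.Nonempty) (h2 : A ≠ Finset.univ) :
    cheeger G ≤ (edgeBd G A).card / min (A.card : ℝ) ((Fintype.card V : ℝ) - A.card) :=
  csInf_le ⟨0, cheeger_set_nonneg G⟩ ⟨A, h1, h2, rfl⟩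

lemma cheeger_nonpos {W : Type*} [Fintype W] (Y : SimpleGraph W)
    (h : ∀ B : Finset W, B.Nonempty → B ≠ Finset.univ → edgeBd Y B = ∅) :
    cheeger Y ≤ 0 := by
  unfold cheeger
  by_cases hne : { r : ℝ | ∃ A : Finset W, A.Nonempty ∧ A ≠ Finset.univ ∧
      r = (edgeBd Y A).card / min (A.card : ℝ) ((Fintype.card W : ℝ) - A.card) }.Nonempty
  · obtain ⟨r, B, h1, h2, hr⟩ := hne
    have h0 : (0:ℝ) ∈ { r : ℝ | ∃ A : Finset W, A.Nonempty ∧ A ≠ Finset.univ ∧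
        r = (edgeBd Y A).card / min (A.card : ℝ) ((Fintype.card W : ℝ) - A.card) } :=
      ⟨B, h1, h2, by rw [h B h1 h2]; simp⟩
    exact csInf_le ⟨0, cheeger_set_nonneg Y⟩ h0
  · rw [Set.not_nonempty_iff_eq_empty.mp hne, Real.sInf_empty]

lemma cheeger_attained {V : Type*} [Fintype V] (G : SimpleGraph V)
    (hne : ∃ A : Finset V, A.Nonempty ∧ A ≠ Finset.univ) :
    ∃ A : Finset V, A.Nonempty ∧ A ≠ Finset.univ ∧
      cheeger G = (edgeBd G A).card / min (A.card : ℝ) ((Fintype.card V : ℝ) - A.card) := by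
  classical
  set S := { r : ℝ | ∃ A : Finset V, A.Nonempty ∧ A ≠ Finset.univ ∧
      r = (edgeBd G A).card / min (A.card : ℝ) ((Fintype.card V : ℝ) - A.card) } with hS
  have hSne : S.Nonempty := by
    obtain ⟨A, h1, h2⟩ := hne
    exact ⟨_, ⟨A, h1, h2, rfl⟩⟩
  have hfin : S.Finite := by
    have hsub : S ⊆ (fun A : Finset V =>
        ((edgeBd G A).card : ℝ) / min (A.card : ℝ) ((Fintype.card V : ℝ) - A.card)) '' Set.univ := by
      rintro r ⟨A, _, _, rfl⟩
      exact ⟨A, Set.mem_univ _, rfl⟩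
    exact Set.Finite.subset (Set.Finite.image _ Set.finite_univ) hsub
  obtain ⟨A, h1, h2, h3⟩ := hSne.csInf_mem hfin
  exact ⟨A, h1, h2, h3⟩

open Classical in
lemma edgeBd_compl {V : Type*} [Fintype V] (G : SimpleGraph V) (A : Finset V) :
    edgeBd G Aᶜ = edgeBd G A := by
  unfold edgeBd
  apply Finset.filter_congr
  intro e he
  constructor
  · rintro ⟨a, ha, b, hb, rfl⟩
    rw [Finset.mem_compl] at ha hb
    exact ⟨b, not_not.mp hb, a, ha, Sym2.eq_swap⟩
  · rintro ⟨a, ha, b, hb, rfl⟩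
    exact ⟨b, Finset.mem_compl.mpr hb, a, by simp [ha], Sym2.eq_swap⟩

open Classical in
lemma cheeger_attained_small {V : Type*} [Fintype V] (G : SimpleGraph V)
    (hne : ∃ A : Finset V, A.Nonempty ∧ A ≠ Finset.univ) :
    ∃ A : Finset V, A.Nonempty ∧ A ≠ Finset.univ ∧ 2 * A.card ≤ Fintype.card V ∧
      cheeger G = (edgeBd G A).card / min (A.card : ℝ) ((Fintype.card V : ℝ) - A.card) := by
  obtain ⟨A, h1, h2, h3⟩ := cheeger_attained G hne
  by_cases hc : 2 * A.card ≤ Fintype.card V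
  · exact ⟨A, h1, h2, hc, h3⟩
  · refine ⟨Aᶜ, ?_, ?_, ?_, ?_⟩
    · rw [← Finset.card_pos, Finset.card_compl]
      have hlt : A.card < Fintype.card V := by
        have := Finset.card_lt_card (A.subset_univ.ssubset_of_ne h2)
        rwa [Finset.card_univ] at this
      omega
    · intro hAc
      have : A = ∅ := by
        have := congrArg (·ᶜ) hAc
        simpa using this
      exact h1.ne_empty this
    · have hle := A.card_le_univ
      rw [Finset.card_compl]
      omega
    · rw [edgeBd_compl, h3]
      congr 1
      have hle : A.card ≤ Fintype.card V := A.card_le_univ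
      rw [Finset.card_compl, Nat.cast_sub hle]
      rw [min_comm]
      congr 1
      ring

lemma walk_crossing {V : Type*} {G : SimpleGraph V} (P : V → Prop) :
    ∀ {u v : V}, G.Walk u v → P u → ¬ P v → ∃ a b, G.Adj a b ∧ P a ∧ ¬ P b := by
  intro u v w
  induction w with
  | nil => intro h1 h2; exact absurd h1 h2
  | @cons u x v h q ih =>
      intro h1 h2
      by_cases hx : P x
      · exact ih hx h2
      · exact ⟨_, _, h, h1, hx⟩

/- STATEMENT 11: tree-collapse comparison of Cheeger constants.  With the notation of
the tree-collapse construction (`X = X(G/H)` the Schreier graph with respect to the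
finite generating set `S` with `|S| = s`, so every vertex of `X` has degree at most
`2|S|`; `Y = X(K/H)` the collapsed Cayley graph of `K/H`; `p` the collapse map whose
fibres have exactly `n = [G:K]` vertices, induce connected (tree) subgraphs, and such
that each edge of `Y` corresponds to exactly one edge of `X` joining the two
corresponding fibres):  if `h(X(G/H)) ≤ 1/(2[G:K])` then
`h(X(K/H)) ≤ 4·h(X(G/H))·[G:K]²·|S|`. -/
set_option maxHeartbeats 1000000 in
open Classical in
theorem cheeger_le_of_tree_collapse {V W : Type*} [Fintype V] [Fintype W]
    (X : SimpleGraph V) (Y : SimpleGraph W) (p : V → W) (n s : ℕ) (hn : 0 < n)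
    (hsurj : Function.Surjective p)
    (hfib : ∀ w : W, (Finset.univ.filter fun v => p v = w).card = n)
    (hconnfib : ∀ w : W, (X.induce {v | p v = w}).Connected)
    (hedge : ∀ w₁ w₂ : W, w₁ ≠ w₂ →
      ((X.edgeFinset.filter fun e =>
          ∃ a b : V, e = s(a, b) ∧ p a = w₁ ∧ p b = w₂).card
        = if Y.Adj w₁ w₂ then 1 else 0))
    (hdeg : ∀ v : V, X.degree v ≤ 2 * s)
    (hsmall : cheeger X ≤ 1 / (2 * n)) :
    cheeger Y ≤ 4 * cheeger X * n ^ 2 * s := by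
  classical
  have hX0 : 0 ≤ cheeger X := cheeger_nonneg X
  -- case s = 0 : Y has no edges
  rcases Nat.eq_zero_or_pos s with hs0 | hs
  · subst hs0
    have hYadj : ∀ w₁ w₂ : W, ¬ Y.Adj w₁ w₂ := by
      intro w₁ w₂ hadj
      have h1 := hedge w₁ w₂ hadj.ne
      rw [if_pos hadj] at h1
      obtain ⟨e, he⟩ := Finset.card_eq_one.mp h1
      have hmem : e ∈ X.edgeFinset.filter fun e =>
          ∃ a b : V, e = s(a, b) ∧ p a = w₁ ∧ p b = w₂ := he ▸ Finset.mem_singleton_self e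
      obtain ⟨heX, a, b, rfl, -, -⟩ := Finset.mem_filter.mp hmem
      have hab : X.Adj a b := (SimpleGraph.mem_edgeSet X).mp (SimpleGraph.mem_edgeFinset.mp heX)
      have : 0 < X.degree a := by
        rw [← SimpleGraph.card_neighborFinset_eq_degree, Finset.card_pos]
        exact ⟨b, (SimpleGraph.mem_neighborFinset X a b).mpr hab⟩
      have := hdeg a
      omega
    have h0 : cheeger Y ≤ 0 := by
      apply cheeger_nonpos
      intro B h1 h2
      rw [Finset.eq_empty_iff_forall_notMem]
      intro e he
      obtain ⟨heY, w₁, -, w₂, -, rfl⟩ := Finset.mem_filter.mp he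
      exact hYadj w₁ w₂ ((SimpleGraph.mem_edgeSet Y).mp (SimpleGraph.mem_edgeFinset.mp heY))
    calc cheeger Y ≤ 0 := h0
      _ ≤ 4 * cheeger X * n ^ 2 * ((0:ℕ):ℝ) := by simp
  -- case |W| ≤ 1 : no valid B
  by_cases hW2 : 2 ≤ Fintype.card W
  swap
  · have h0 : cheeger Y ≤ 0 := by
      apply cheeger_nonpos
      intro B h1 h2
      exfalso
      have hlt : B.card < Fintype.card W := by
        have := Finset.card_lt_card (B.subset_univ.ssubset_of_ne h2)
        rwa [Finset.card_univ] at this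
      have := Finset.card_pos.mpr h1
      omega
    refine le_trans h0 ?_
    positivity
  -- main case
  -- main case
  have hn1 : 1 ≤ n := hn
  have hcardV : Fintype.card V = Fintype.card W * n := by
    rw [← Finset.card_univ (α := V),
      Finset.card_eq_sum_card_fiberwise (f := p) (t := (univ : Finset W)) (fun x _ => Finset.mem_univ _)]
    simp [hfib, Finset.card_univ]
  have hcV2 : 2 ≤ Fintype.card V := by
    calc 2 = 2 * 1 := by ring
    _ ≤ Fintype.card W * n := Nat.mul_le_mul hW2 hn
    _ = Fintype.card V := hcardV.symm
  have hVne : Nonempty V := Fintype.card_pos_iff.mp (by omega)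
  obtain ⟨v₀⟩ := hVne
  haveI : Nonempty (Sym2 V) := ⟨s(v₀, v₀)⟩
  have hexA : ∃ A : Finset V, A.Nonempty ∧ A ≠ Finset.univ := by
    refine ⟨{v₀}, Finset.singleton_nonempty v₀, ?_⟩
    intro h
    have := congrArg Finset.card h
    rw [Finset.card_singleton, Finset.card_univ] at this
    omega
  obtain ⟨A, hAne, hAuniv, hA2, hXval⟩ := cheeger_attained_small X hexA
  have hA1 : 1 ≤ A.card := Finset.card_pos.mpr hAne
  have hAle : A.card ≤ Fintype.card V := A.card_le_univ
  have haR : (1:ℝ) ≤ (A.card : ℝ) := by exact_mod_cast hA1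
  have ha0 : (0:ℝ) < (A.card : ℝ) := by linarith
  have hminA : min ((A.card:ℝ)) ((Fintype.card V : ℝ) - A.card) = (A.card:ℝ) := by
    apply min_eq_left
    have h2A : ((2 * A.card : ℕ) : ℝ) ≤ ((Fintype.card V : ℕ) : ℝ) := by exact_mod_cast hA2
    push_cast at h2A
    linarith
  rw [hminA] at hXval
  have heA : ((edgeBd X A).card : ℝ) = cheeger X * A.card := by
    rw [hXval, div_mul_cancel₀]
    exact ha0.ne'
  -- definitions
  set B : Finset W := univ.filter (fun w => ∀ v, p v = w → v ∈ A) with hBdef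
  set T : Finset W := univ.filter (fun w => (∃ v, p v = w ∧ v ∈ A) ∧ ∃ v, p v = w ∧ v ∉ A) with hTdef
  set R : Finset V := A.filter (fun b => p b ∈ T) with hRdef
  set Q : Finset (V × V) := univ.filter (fun q => q.1 ∈ R ∧ X.Adj q.1 q.2) with hQdef
  -- each split fibre contains a crossing edge
  have hcross : ∀ w ∈ T, ∃ e, e ∈ edgeBd X A ∧ ∃ x y : V, e = s(x,y) ∧ p x = w ∧ p y = w := by
    intro w hw
    rw [hTdef, Finset.mem_filter] at hw
    obtain ⟨-, ⟨x0, hx0, hx0A⟩, ⟨y0, hy0, hy0A⟩⟩ := hw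
    have hreach := (hconnfib w).preconnected ⟨x0, hx0⟩ ⟨y0, hy0⟩
    obtain ⟨wk⟩ := hreach
    obtain ⟨xx, yy, hadj, hxxA, hyyA⟩ :=
      walk_crossing (G := X.induce {v | p v = w}) (fun z => (z : V) ∈ A) wk hx0A hy0A
    have hadj' : X.Adj xx.val yy.val := hadj
    refine ⟨s(xx.val, yy.val), ?_, xx.val, yy.val, rfl, xx.2, yy.2⟩
    unfold edgeBd
    rw [Finset.mem_filter]
    exact ⟨SimpleGraph.mem_edgeFinset.mpr ((SimpleGraph.mem_edgeSet X).mpr hadj'),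
      xx.val, hxxA, yy.val, hyyA, rfl⟩
  -- |T| ≤ |∂A|
  have hT : T.card ≤ (edgeBd X A).card := by
    set f : W → Sym2 V := fun w =>
      if h : ∃ e, e ∈ edgeBd X A ∧ ∃ x y : V, e = s(x,y) ∧ p x = w ∧ p y = w
      then h.choose else Classical.arbitrary _ with hfdef
    apply Finset.card_le_card_of_injOn f
    · intro w hw
      have hP := hcross w hw
      rw [hfdef]
      simp only
      rw [dif_pos hP]
      exact hP.choose_spec.1
    · intro w₁ hw₁ w₂ hw₂ heq
      have hP₁ := hcross w₁ (Finset.mem_coe.mp hw₁)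
      have hP₂ := hcross w₂ (Finset.mem_coe.mp hw₂)
      rw [hfdef] at heq
      simp only [dif_pos hP₁, dif_pos hP₂] at heq
      obtain ⟨-, x₁, y₁, hxy₁, hpx₁, hpy₁⟩ := hP₁.choose_spec
      obtain ⟨-, x₂, y₂, hxy₂, hpx₂, hpy₂⟩ := hP₂.choose_spec
      have hss : s(x₁,y₁) = s(x₂,y₂) := by rw [← hxy₁, heq, hxy₂]
      rw [Sym2.eq_iff] at hss
      rcases hss with ⟨h1, h2⟩ | ⟨h1, h2⟩
      · rw [← hpx₁, h1, hpx₂]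
      · rw [← hpx₁, h1, hpy₂]
  -- |R| ≤ (n-1)|T|
  have hRT : R.card ≤ (n - 1) * T.card := by
    have hsub : R ⊆ T.biUnion (fun w => univ.filter fun v => p v = w ∧ v ∈ A) := by
      intro b hb
      rw [hRdef, Finset.mem_filter] at hb
      rw [Finset.mem_biUnion]
      exact ⟨p b, hb.2, Finset.mem_filter.mpr ⟨Finset.mem_univ _, rfl, hb.1⟩⟩
    calc R.card ≤ _ := Finset.card_le_card hsub
      _ ≤ ∑ w ∈ T, (univ.filter fun v => p v = w ∧ v ∈ A).card := Finset.card_biUnion_le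
      _ ≤ ∑ _w ∈ T, (n - 1) := by
          apply Finset.sum_le_sum
          intro w hw
          rw [hTdef, Finset.mem_filter] at hw
          obtain ⟨-, -, v₁, hv₁, hv₁A⟩ := hw
          have hsub2 : (univ.filter fun v => p v = w ∧ v ∈ A)
              ⊆ (univ.filter fun v => p v = w).erase v₁ := by
            intro x hx
            rw [Finset.mem_filter] at hx
            rw [Finset.mem_erase]
            refine ⟨?_, Finset.mem_filter.mpr ⟨Finset.mem_univ _, hx.2.1⟩⟩
            rintro rfl
            exact hv₁A hx.2.2
          calc _ ≤ _ := Finset.card_le_card hsub2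
            _ = n - 1 := by
                have hv₁mem : v₁ ∈ univ.filter (fun v => p v = w) :=
                  Finset.mem_filter.mpr ⟨Finset.mem_univ _, hv₁⟩
                rw [Finset.card_erase_of_mem hv₁mem, hfib]
      _ = (n-1) * T.card := by rw [Finset.sum_const, smul_eq_mul, mul_comm]
  -- |Q| ≤ |R| * 2s
  have hQb : Q.card ≤ R.card * (2 * s) := by
    have hsub : Q ⊆ R.biUnion (fun b => {b} ×ˢ X.neighborFinset b) := by
      intro q hq
      rw [hQdef, Finset.mem_filter] at hq
      rw [Finset.mem_biUnion]
      exact ⟨q.1, hq.2.1, Finset.mem_product.mpr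
        ⟨Finset.mem_singleton_self _, (SimpleGraph.mem_neighborFinset X _ _).mpr hq.2.2⟩⟩
    calc Q.card ≤ _ := Finset.card_le_card hsub
      _ ≤ ∑ b ∈ R, ({b} ×ˢ X.neighborFinset b).card := Finset.card_biUnion_le
      _ ≤ ∑ _b ∈ R, (2 * s) := by
          apply Finset.sum_le_sum
          intro b _
          rw [Finset.card_product, Finset.card_singleton, one_mul,
            SimpleGraph.card_neighborFinset_eq_degree]
          exact hdeg b
      _ = R.card * (2*s) := by rw [Finset.sum_const, smul_eq_mul]
  -- |A| ≤ (|B|+|T|) n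
  have hABT : A.card ≤ (B.card + T.card) * n := by
    have hsub : A ⊆ (B ∪ T).biUnion (fun w => univ.filter fun v => p v = w) := by
      intro a ha
      rw [Finset.mem_biUnion]
      refine ⟨p a, ?_, Finset.mem_filter.mpr ⟨Finset.mem_univ _, rfl⟩⟩
      by_cases hall : ∀ v, p v = p a → v ∈ A
      · exact Finset.mem_union_left _
          (by rw [hBdef]; exact Finset.mem_filter.mpr ⟨Finset.mem_univ _, hall⟩)
      · push_neg at hall
        obtain ⟨v₁, hv₁, hv₁A⟩ := hall
        exact Finset.mem_union_right _
          (by rw [hTdef]; exact Finset.mem_filter.mpr ⟨Finset.mem_univ _, ⟨a, rfl, ha⟩, ⟨v₁, hv₁, hv₁A⟩⟩)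
    calc A.card ≤ _ := Finset.card_le_card hsub
      _ ≤ ∑ w ∈ B ∪ T, (univ.filter fun v => p v = w).card := Finset.card_biUnion_le
      _ = ∑ _w ∈ B ∪ T, n := Finset.sum_congr rfl (fun w _ => hfib w)
      _ = (B ∪ T).card * n := by rw [Finset.sum_const, smul_eq_mul]
      _ ≤ (B.card + T.card) * n := Nat.mul_le_mul_right n (Finset.card_union_le B T)
  -- complement count
  have hcompl : Fintype.card V - A.card ≤ (Fintype.card W - B.card) * n := by
    have hsub : Aᶜ ⊆ Bᶜ.biUnion (fun w => univ.filter fun v => p v = w) := by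
      intro v hv
      rw [Finset.mem_compl] at hv
      rw [Finset.mem_biUnion]
      refine ⟨p v, ?_, Finset.mem_filter.mpr ⟨Finset.mem_univ _, rfl⟩⟩
      rw [Finset.mem_compl, hBdef, Finset.mem_filter]
      rintro ⟨-, hall⟩
      exact hv (hall v rfl)
    have hchain := calc Aᶜ.card ≤ _ := Finset.card_le_card hsub
      _ ≤ ∑ w ∈ Bᶜ, (univ.filter fun v => p v = w).card := Finset.card_biUnion_le
      _ = ∑ _w ∈ Bᶜ, n := Finset.sum_congr rfl (fun w _ => hfib w)
      _ = Bᶜ.card * n := by rw [Finset.sum_const, smul_eq_mul]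
    rwa [Finset.card_compl, Finset.card_compl] at hchain
  -- |∂Y B| ≤ |∂X A| + |Q|
  have hEB : (edgeBd Y B).card ≤ (edgeBd X A).card + Q.card := by
    set ρ : Sym2 V ⊕ V × V → Sym2 W := Sum.elim (Sym2.map p) (fun q => s(p q.1, p q.2)) with hρ
    set target : Finset (Sym2 V ⊕ V × V) := (edgeBd X A).image Sum.inl ∪ Q.image Sum.inr with htarget
    have hsurjOn : Set.SurjOn ρ ↑target ↑(edgeBd Y B) := by
      intro ew hew
      rw [Finset.mem_coe] at hew
      unfold edgeBd at hew
      rw [Finset.mem_filter] at hew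
      obtain ⟨heY, w₁, hw₁B, w₂, hw₂B, rfl⟩ := hew
      have hadj : Y.Adj w₁ w₂ := (SimpleGraph.mem_edgeSet Y).mp (SimpleGraph.mem_edgeFinset.mp heY)
      have h1 := hedge w₁ w₂ hadj.ne
      rw [if_pos hadj] at h1
      obtain ⟨e', he'⟩ := Finset.card_eq_one.mp h1
      have hmem : e' ∈ X.edgeFinset.filter fun e =>
          ∃ a b : V, e = s(a, b) ∧ p a = w₁ ∧ p b = w₂ := he' ▸ Finset.mem_singleton_self e'
      obtain ⟨he'X, x, y, hxy, hpx, hpy⟩ := Finset.mem_filter.mp hmem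
      have hadjxy : X.Adj x y := by
        have h := SimpleGraph.mem_edgeFinset.mp he'X
        rw [hxy] at h
        exact (SimpleGraph.mem_edgeSet X).mp h
      have hxA : x ∈ A := by
        rw [hBdef, Finset.mem_filter] at hw₁B
        exact hw₁B.2 x hpx
      by_cases hyA : y ∈ A
      · refine ⟨Sum.inr (y, x), ?_, ?_⟩
        · rw [Finset.mem_coe, htarget]
          apply Finset.mem_union_right
          apply Finset.mem_image_of_mem
          rw [hQdef, Finset.mem_filter]
          refine ⟨Finset.mem_univ _, ?_, hadjxy.symm⟩
          rw [hRdef, Finset.mem_filter]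
          refine ⟨hyA, ?_⟩
          rw [hpy, hTdef, Finset.mem_filter]
          have hw₂B' : ∃ v, p v = w₂ ∧ v ∉ A := by
            by_contra hcon
            push_neg at hcon
            apply hw₂B
            rw [hBdef, Finset.mem_filter]
            exact ⟨Finset.mem_univ _, fun v hv => hcon v hv⟩
          exact ⟨Finset.mem_univ _, ⟨y, hpy, hyA⟩, hw₂B'⟩
        · show ρ _ = _
          rw [hρ]
          simp only [Sum.elim_inr]
          rw [hpy, hpx]
          exact Sym2.eq_swap
      · refine ⟨Sum.inl e', ?_, ?_⟩
        · rw [Finset.mem_coe, htarget]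
          apply Finset.mem_union_left
          apply Finset.mem_image_of_mem
          unfold edgeBd
          rw [Finset.mem_filter]
          exact ⟨he'X, x, hxA, y, hyA, hxy⟩
        · show ρ _ = _
          rw [hρ]
          simp only [Sum.elim_inl]
          rw [hxy, Sym2.map_pair_eq, hpx, hpy]
    calc (edgeBd Y B).card ≤ target.card := Finset.card_le_card_of_surjOn ρ hsurjOn
      _ ≤ ((edgeBd X A).image Sum.inl).card + (Q.image Sum.inr).card := Finset.card_union_le _ _
      _ ≤ (edgeBd X A).card + Q.card := Nat.add_le_add Finset.card_image_le Finset.card_image_le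
  -- real arithmetic
  clear_value B T R Q
  clear hcross hedge hconnfib hdeg hsurj hfib hexA hminA
  have hBle : B.card ≤ Fintype.card W := B.card_le_univ
  have hnR : (1:ℝ) ≤ (n:ℝ) := by exact_mod_cast hn1
  have hnpos : (0:ℝ) < (n:ℝ) := by linarith
  have hsR : (1:ℝ) ≤ (s:ℝ) := by exact_mod_cast hs
  have rT : ((T.card : ℝ)) ≤ cheeger X * A.card := by rw [← heA]; exact_mod_cast hT
  have rEB : ((edgeBd Y B).card : ℝ) ≤ (1 + 2*(s:ℝ)*((n:ℝ)-1)) * (cheeger X * A.card) := by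
    have h1 : (edgeBd Y B).card ≤ (edgeBd X A).card + ((n-1) * T.card) * (2*s) :=
      le_trans hEB (Nat.add_le_add_left (le_trans hQb (Nat.mul_le_mul_right _ hRT)) _)
    have h2 : ((edgeBd Y B).card : ℝ) ≤ ((edgeBd X A).card:ℝ) + ((n:ℝ)-1) * T.card * (2*(s:ℝ)) := by
      have h3 := (Nat.cast_le (α := ℝ)).mpr h1
      push_cast [Nat.cast_sub hn1] at h3
      linarith
    rw [heA] at h2
    have hco : (0:ℝ) ≤ ((n:ℝ)-1) * (2*(s:ℝ)) := by
      apply mul_nonneg <;> [linarith; positivity]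
    have h4 := mul_le_mul_of_nonneg_left rT hco
    nlinarith [h2, h4]
  have rABT : (A.card : ℝ) ≤ ((B.card:ℝ) + T.card) * n := by exact_mod_cast hABT
  have rcompl : (Fintype.card V : ℝ) - A.card ≤ ((Fintype.card W : ℝ) - B.card) * n := by
    have h3 := (Nat.cast_le (α := ℝ)).mpr hcompl
    push_cast [Nat.cast_sub hAle, Nat.cast_sub hBle] at h3
    linarith
  have hnh : (n:ℝ) * cheeger X ≤ 1/2 := by
    have h5 := mul_le_mul_of_nonneg_left hsmall (le_of_lt hnpos)
    calc (n:ℝ) * cheeger X ≤ (n:ℝ) * (1/(2*(n:ℝ))) := h5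
      _ = 1/2 := by field_simp
  have rB : (A.card : ℝ) ≤ 2 * n * B.card := by
    have e1 := mul_le_mul_of_nonneg_right rT hnpos.le
    have e3 := mul_le_mul_of_nonneg_right hnh ha0.le
    nlinarith [rABT, e1, e3]
  have rWB : (A.card : ℝ) ≤ 2 * n * ((Fintype.card W : ℝ) - B.card) := by
    have h2A : ((2 * A.card : ℕ):ℝ) ≤ ((Fintype.card V : ℕ):ℝ) := by exact_mod_cast hA2
    push_cast at h2A
    nlinarith [rcompl, h2A, haR]
  have hBpos : 0 < B.card := by
    by_contra hc
    push_neg at hc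
    have h0 : (B.card : ℝ) = 0 := by
      have : B.card = 0 := by omega
      exact_mod_cast this
    rw [h0] at rB
    linarith
  have hBne : B.Nonempty := Finset.card_pos.mp hBpos
  have hBlt : B.card < Fintype.card W := by
    by_contra hc
    push_neg at hc
    have h6 : ((Fintype.card W:ℝ) - B.card) ≤ 0 := by
      have : (Fintype.card W : ℝ) ≤ (B.card:ℝ) := by exact_mod_cast hc
      linarith
    nlinarith [rWB, haR, hnpos, mul_le_mul_of_nonneg_left h6 (by positivity : (0:ℝ) ≤ 2*(n:ℝ))]
  have hBuniv : B ≠ Finset.univ := by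
    intro h
    rw [h, Finset.card_univ] at hBlt
    exact lt_irrefl _ hBlt
  have hmain := cheeger_le_ratio Y B hBne hBuniv
  have hdenom : (A.card:ℝ)/(2*(n:ℝ)) ≤ min ((B.card:ℝ)) ((Fintype.card W:ℝ) - B.card) := by
    apply le_min
    · rw [div_le_iff₀ (by positivity)]
      nlinarith [rB]
    · rw [div_le_iff₀ (by positivity)]
      nlinarith [rWB]
  have hdpos : (0:ℝ) < (A.card:ℝ)/(2*(n:ℝ)) := div_pos ha0 (by linarith)
  have hnum_nn : (0:ℝ) ≤ (1 + 2*(s:ℝ)*((n:ℝ)-1)) * (cheeger X * A.card) := by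
    apply mul_nonneg
    · nlinarith [hnR, hsR]
    · exact mul_nonneg hX0 ha0.le
  have hstep : cheeger Y ≤ ((1 + 2*(s:ℝ)*((n:ℝ)-1)) * (cheeger X * A.card)) / ((A.card:ℝ)/(2*(n:ℝ))) :=
    le_trans hmain (div_le_div₀ hnum_nn rEB hdpos hdenom)
  have hval : ((1 + 2*(s:ℝ)*((n:ℝ)-1)) * (cheeger X * A.card)) / ((A.card:ℝ)/(2*(n:ℝ)))
      = 2*(n:ℝ)*(1 + 2*(s:ℝ)*((n:ℝ)-1))*cheeger X := by
    rw [div_div_eq_mul_div, div_eq_iff ha0.ne']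
    ring
  rw [hval] at hstep
  refine le_trans hstep ?_
  nlinarith [hX0, hnR, hsR,
    mul_nonneg (mul_nonneg (by linarith : (0:ℝ) ≤ 2*(n:ℝ)) (by linarith : (0:ℝ) ≤ 2*(s:ℝ)-1)) hX0]
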